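/- arXiv:2211.04458 — 3 statements merged into one kernel-verified Lean document; each statement's English description precedes it below -/
import Mathlib

section
/- Let G be a graph and q ≥ 1 an integer. Let U be the set of vertices u of G with |N_{G²}[u]| > q (closed neighborhood in the square graph), and let W = U ∪ N_G(U). Then G has a proper q-coloring of its square G² if and only if the induced subgraph G[W] has a proper q-coloring of its square (G[W])². -/
/-!
Restricting a square coloring of `G` to `W` is a square coloring of `G[W]`, since `G[W]²` is a
subgraph of `G²`. Conversely, two vertices of `U` at distance at most 2 in `G` are joined through
`N_G(U) ⊆ W`, so they are at distance at most 2 in `G[W]` as well; hence a square coloring of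
`G[W]` is proper on `U`. Every vertex outside `U` has at most `q - 1` neighbours in `G²`, so the
remaining vertices can be colored greedily, one at a time.
-/

open SimpleGraph

/-- The square of a graph: vertices adjacent iff at distance at most 2,
i.e. adjacent or sharing a common neighbor. -/
def squareGraph {V : Type*} (G : SimpleGraph V) : SimpleGraph V where
  Adj u v := u ≠ v ∧ (G.Adj u v ∨ ∃ w, G.Adj u w ∧ G.Adj w v)
  symm := ⟨by
    rintro u v ⟨h1, h2⟩
    refine ⟨h1.symm, ?_⟩
    rcases h2 with h | ⟨w, hw1, hw2⟩
    · exact Or.inl h.symm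
    · exact Or.inr ⟨w, hw2.symm, hw1.symm⟩⟩
  loopless := ⟨fun v h => h.1 rfl⟩

namespace SimpleGraph

variable {V V' α : Type*}

theorem ncard_neighborSet_union_singleton [Finite V] (H : SimpleGraph V) (v : V) :
    (H.neighborSet v ∪ {v}).ncard = (H.neighborSet v).ncard + 1 := by
  rw [Set.union_singleton]
  exact Set.ncard_insert_of_notMem H.notMem_neighborSet_self

def IsProperOn (H : SimpleGraph V) (c : V → α) (S : Set V) : Prop :=
  ∀ ⦃u⦄, u ∈ S → ∀ ⦃v⦄, v ∈ S → H.Adj u v → c u ≠ c v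

theorem Coloring.isProperOn_of_induce {H : SimpleGraph V} {S : Set V}
    (C : (H.induce S).Coloring α) (c : V → α) (hc : ∀ v (hv : v ∈ S), c v = C ⟨v, hv⟩) :
    H.IsProperOn c S := fun u hu v hv huv => by
  rw [hc u hu, hc v hv]
  exact C.valid (G := H.induce S) huv

theorem IsProperOn.exists_update_insert [Finite V] [Finite α] [DecidableEq V]
    {H : SimpleGraph V} {c : V → α} {S : Set V} (hc : H.IsProperOn c S) {v : V} (hv : (H.neighborSet v).ncard < Nat.card α) :
    ∃ a, H.IsProperOn (Function.update c v a) (insert v S) := by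
  obtain ⟨a, ha⟩ : ∃ a, a ∉ c '' H.neighborSet v := by
    by_contra! h
    have := (Set.ncard_image_le (f := c) (s := H.neighborSet v)).trans_lt hv
    rw [Set.eq_univ_of_forall h, Set.ncard_univ] at this
    exact this.false
  refine ⟨a, fun x hx y hy hxy => ?_⟩
  rcases eq_or_ne y x with rfl | hyx
  · exact absurd hxy H.irrefl
  rcases eq_or_ne x v with rfl | hxv
  · rw [Function.update_self, Function.update_of_ne hyx]
    exact fun h => ha ⟨y, hxy, h.symm⟩
  rcases eq_or_ne y v with rfl | hyv
  · rw [Function.update_self, Function.update_of_ne hxv]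
    exact fun h => ha ⟨x, hxy.symm, h⟩
  · rw [Function.update_of_ne hxv, Function.update_of_ne hyv]
    exact hc (hx.resolve_left hxv) (hy.resolve_left hyv) hxy

theorem IsProperOn.nonempty_coloring [Finite V] [Finite α] {H : SimpleGraph V} {c : V → α}
    {S : Set V} (hc : H.IsProperOn c S)
    (hdeg : ∀ v ∉ S, (H.neighborSet v).ncard < Nat.card α) : Nonempty (H.Coloring α) := by
  classical
  obtain ⟨-, c', hc'⟩ := Set.Finite.induction_to_univ
    (C := fun T => S ⊆ T ∧ ∃ c : V → α, H.IsProperOn c T) S ⟨subset_rfl, c, hc⟩ <| by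
      rintro T hT ⟨hST, c, hc⟩
      obtain ⟨v, hv⟩ := (Set.ne_univ_iff_exists_notMem T).mp hT
      obtain ⟨a, ha⟩ := hc.exists_update_insert (hdeg v fun h => hv (hST h))
      exact ⟨v, hv, hST.trans (Set.subset_insert v T), _, ha⟩
  exact ⟨Coloring.mk c' fun huv => hc' trivial trivial huv⟩

theorem nonempty_coloring_of_induce [Finite V] [Finite α] {H : SimpleGraph V} {S : Set V}
    (C : (H.induce S).Coloring α) (hdeg : ∀ v ∉ S, (H.neighborSet v).ncard < Nat.card α) :
    Nonempty (H.Coloring α) := by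
  classical
  -- a vertex outside `S` forces `0 < Nat.card α`, which supplies a dummy color
  let c : V → α := fun v =>
    if hv : v ∈ S then C ⟨v, hv⟩ else (Nat.card_pos_iff.mp (hdeg v hv).pos).1.some
  exact (C.isProperOn_of_induce c fun v hv => dif_pos hv).nonempty_coloring hdeg

def Copy.squareGraph {G : SimpleGraph V} {G' : SimpleGraph V'} (f : Copy G G') :
    Copy (squareGraph G) (squareGraph G') :=
  Hom.toCopy
    { toFun := f
      map_rel' := fun ⟨hne, hadj⟩ => ⟨f.injective.ne hne, hadj.imp f.toHom.map_adj
        fun ⟨w, huw, hwv⟩ => ⟨f w, f.toHom.map_adj huw, f.toHom.map_adj hwv⟩⟩ }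
    f.injective

def squareGraphInduceHom (G : SimpleGraph V) {S W : Set V} (hSW : S ⊆ W)
    (hN : ∀ u ∈ S, ∀ v, G.Adj u v → v ∈ W) :
    (squareGraph G).induce S →g squareGraph (G.induce W) where
  toFun u := ⟨u, hSW u.2⟩
  map_rel' := fun {u _} ⟨hne, hadj⟩ => ⟨fun h => hne (Subtype.mk.inj h),
    hadj.imp id fun ⟨w, huw, hwv⟩ => ⟨⟨w, hN u u.2 w huw⟩, huw, hwv⟩⟩

end SimpleGraph

theorem square_coloring_irreducible_general {V : Type*} [Fintype V] (G : SimpleGraph V)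
    (q : ℕ)
    (U : Set V) (hU : U = {u : V | q < ((squareGraph G).neighborSet u ∪ {u}).ncard})
    (W : Set V) (hW : W = U ∪ {v : V | ∃ u ∈ U, G.Adj u v}) :
    (squareGraph G).Colorable q ↔ (squareGraph (G.induce W)).Colorable q := by
  subst hW
  refine ⟨fun h => h.of_hom (Copy.induce G _).squareGraph.toHom, fun ⟨C⟩ => ?_⟩
  refine nonempty_coloring_of_induce
    (C.comp (squareGraphInduceHom G Set.subset_union_left fun u hu v huv => .inr ⟨u, hu, huv⟩))
    fun v hv => ?_
  rw [hU, Set.mem_ofPred_eq, not_lt, ncard_neighborSet_union_singleton] at hv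
  simpa using hv

/-- Let `U` be the set of vertices whose closed neighborhood in the
square graph has more than `q` elements, and `W = U ∪ N_G(U)`.  Then `G` has a square
`q`-coloring iff the induced subgraph `G[W]` has one. -/
theorem square_coloring_irreducible {V : Type*} [Fintype V] (G : SimpleGraph V)
    (q : ℕ) (hq : 1 ≤ q)
    (U : Set V) (hU : U = {u : V | q < ((squareGraph G).neighborSet u ∪ {u}).ncard})
    (W : Set V) (hW : W = U ∪ {v : V | ∃ u ∈ U, G.Adj u v}) :
    (squareGraph G).Colorable q ↔ (squareGraph (G.induce W)).Colorable q :=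
  square_coloring_irreducible_general G q U hU W hW
end

section
/- Let G be a graph with tree decomposition (T, β'), and let C' ⊆ V(G). Define β(t) = (⋃_{w ∈ β'(t) ∩ C'} N_G[w]) ∩ C for a set C with N_G[C] ⊆ C'. Then (T, β) is a tree decomposition of G²[C], the subgraph of the square of G induced on C. Moreover, if (T, β') has width at most w and G has maximum degree Δ, then every bag β(t) has size at most (Δ+1)(w+1). -/
open SimpleGraph

/-! A vertex `v ∈ C` lies in the new bag at `t` exactly when some `w ∈ N_G[v]` lies in `β' t`,
so its new subtree is the union of the old subtrees of the vertices of `N_G[v]`. Each of these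
meets the old subtree of `v`, because the edge `vw` is covered by some bag, so the union is
connected. A vertex at distance two from `u` via `w` lies in the new bag of any bag covering the
edge `uw`. Every old vertex contributes at most `Δ + 1` new ones, whence the size bound. -/

namespace Set

lemma Finite.ncard_biUnion_le_mul {α ι : Type*} {t : Set ι} (ht : t.Finite) {s : ι → Set α}
    {n : ℕ} (hs : ∀ i ∈ t, (s i).ncard ≤ n) : (⋃ i ∈ t, s i).ncard ≤ t.ncard * n := by
  calc (⋃ i ∈ t, s i).ncard = (⋃ i ∈ ht.toFinset, s i).ncard := by simp
    _ ≤ ∑ i ∈ ht.toFinset, (s i).ncard := ht.toFinset.set_ncard_biUnion_le s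
    _ ≤ ht.toFinset.card • n := Finset.sum_le_card_nsmul _ _ _ (by simpa using hs)
    _ = t.ncard * n := by rw [ncard_eq_toFinset_card t ht, smul_eq_mul]

end Set

namespace SimpleGraph

variable {V ι : Type*}

lemma induce_biUnion_connected {α : Type*} {T : SimpleGraph ι} {S : Set α} {a₀ : α}
    (ha₀ : a₀ ∈ S) {B : α → Set ι} (hB : ∀ a ∈ S, (T.induce (B a)).Connected)
    (hmeet : ∀ a ∈ S, (B a₀ ∩ B a).Nonempty) :
    (T.induce (⋃ a ∈ S, B a)).Connected := by
  obtain ⟨⟨u, hu⟩⟩ := (hB a₀ ha₀).nonempty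
  refine T.induce_connected_of_patches u (Set.mem_biUnion ha₀ hu) fun hv => ?_
  obtain ⟨a, ha, hva⟩ := Set.mem_iUnion₂.1 hv
  exact ⟨B a₀ ∪ B a,
    Set.union_subset (Set.subset_biUnion_of_mem ha₀) (Set.subset_biUnion_of_mem ha),
    Or.inl hu, Or.inr hva,
    induce_union_connected (hB a₀ ha₀).preconnected (hB a ha).preconnected (hmeet a ha) _ _⟩

lemma ncard_biUnion_insert_neighborSet_le (G : SimpleGraph V) {Δ : ℕ}
    (hdeg : ∀ v, (G.neighborSet v).ncard ≤ Δ) {s : Set V} (hs : s.Finite) :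
    (⋃ w ∈ s, insert w (G.neighborSet w)).ncard ≤ s.ncard * (Δ + 1) :=
  hs.ncard_biUnion_le_mul fun w _ =>
    (Set.ncard_insert_le _ _).trans (Nat.add_le_add_right (hdeg w) 1)

section SquareBag

variable (G : SimpleGraph V) (β' : ι → Set V) (C C' : Set V)

def squareBag (t : ι) : Set V :=
  {v ∈ C | ∃ w ∈ β' t, w ∈ C' ∧ (w = v ∨ G.Adj w v)}

variable {G β' C C'}

lemma self_mem_squareBag (hCC' : ∀ v ∈ C, ∀ w : V, (w = v ∨ G.Adj v w) → w ∈ C')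
    {v : V} (hv : v ∈ C) {t : ι} (ht : v ∈ β' t) : v ∈ squareBag G β' C C' t :=
  ⟨hv, v, ht, hCC' v hv v (Or.inl rfl), Or.inl rfl⟩

lemma setOf_mem_squareBag (hCC' : ∀ v ∈ C, ∀ w : V, (w = v ∨ G.Adj v w) → w ∈ C')
    {v : V} (hv : v ∈ C) :
    {t | v ∈ squareBag G β' C C' t} = ⋃ w ∈ insert v (G.neighborSet v), {t | w ∈ β' t} := by
  ext t
  simp only [squareBag, Set.mem_ofPred_eq, Set.mem_iUnion, Set.mem_insert_iff,
    mem_neighborSet, exists_prop]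
  constructor
  · rintro ⟨-, w, hwt, -, hwv⟩
    exact ⟨w, hwv.imp id G.adj_symm, hwt⟩
  · rintro ⟨w, hvw, hwt⟩
    exact ⟨hv, w, hwt, hCC' v hv w hvw, hvw.imp id G.adj_symm⟩

lemma squareBag_subset (t : ι) :
    squareBag G β' C C' t ⊆ ⋃ w ∈ β' t, insert w (G.neighborSet w) := by
  rintro v ⟨-, w, hwt, -, hwv⟩
  exact Set.mem_biUnion hwt (hwv.imp Eq.symm id)

end SquareBag

end SimpleGraph

theorem tree_decomposition_of_square_general {V ι : Type*} [Fintype V]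
    (G : SimpleGraph V) (T : SimpleGraph ι)
    (β' : ι → Set V)
    (hcover : ∀ v : V, ∃ t, v ∈ β' t)
    (hedge : ∀ u v : V, G.Adj u v → ∃ t, u ∈ β' t ∧ v ∈ β' t)
    (hconn : ∀ v : V, (T.induce {t | v ∈ β' t}).Connected)
    (C C' : Set V)
    (hCC' : ∀ v ∈ C, ∀ w : V, (w = v ∨ G.Adj v w) → w ∈ C')
    (β : ι → Set V)
    (hβ : ∀ t, β t = {v ∈ C | ∃ w ∈ β' t, w ∈ C' ∧ (w = v ∨ G.Adj w v)})
    (Δ k : ℕ)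
    (hdeg : ∀ v : V, (G.neighborSet v).ncard ≤ Δ)
    (hwidth : ∀ t, (β' t).ncard ≤ k + 1) :
    (∀ v ∈ C, ∃ t, v ∈ β t) ∧
    (∀ u v : V, u ∈ C → v ∈ C → (squareGraph G).Adj u v → ∃ t, u ∈ β t ∧ v ∈ β t) ∧
    (∀ v ∈ C, (T.induce {t | v ∈ β t}).Connected) ∧
    (∀ t, (β t).ncard ≤ (Δ + 1) * (k + 1)) := by
  obtain rfl : β = squareBag G β' C C' := funext hβ
  refine ⟨fun v hv => ?_, fun u v hu hv huv => ?_, fun v hv => ?_, fun t => ?_⟩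
  · obtain ⟨t, ht⟩ := hcover v
    exact ⟨t, self_mem_squareBag hCC' hv ht⟩
  · obtain ⟨-, huv | ⟨w, huw, hwv⟩⟩ := huv
    · obtain ⟨t, hut, hvt⟩ := hedge u v huv
      exact ⟨t, self_mem_squareBag hCC' hu hut, self_mem_squareBag hCC' hv hvt⟩
    · obtain ⟨t, hut, hwt⟩ := hedge u w huw
      exact ⟨t, self_mem_squareBag hCC' hu hut,
        hv, w, hwt, hCC' u hu w (Or.inr huw), Or.inr hwv⟩
  · rw [setOf_mem_squareBag hCC' hv]
    refine induce_biUnion_connected (Set.mem_insert v _) (fun w _ => hconn w) ?_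
    rintro w (rfl | hvw)
    · obtain ⟨t, ht⟩ := hcover w
      exact ⟨t, ht, ht⟩
    · exact hedge v w hvw
  · calc (squareBag G β' C C' t).ncard
        ≤ (⋃ w ∈ β' t, insert w (G.neighborSet w)).ncard :=
          Set.ncard_le_ncard (squareBag_subset t) (Set.toFinite _)
      _ ≤ (β' t).ncard * (Δ + 1) := ncard_biUnion_insert_neighborSet_le G hdeg (Set.toFinite _)
      _ ≤ (Δ + 1) * (k + 1) := by rw [mul_comm]; exact Nat.mul_le_mul_left _ (hwidth t)

/-- From a tree decomposition `(T, β')` of `G` and sets `C, C'` with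
`N_G[C] ⊆ C'`, the bags `β t = (⋃_{w ∈ β'(t) ∩ C'} N_G[w]) ∩ C` form a tree
decomposition of `G²[C]`, and if `(T, β')` has width at most `k` and `G` has maximum
degree `Δ`, every new bag has size at most `(Δ+1)(k+1)`. -/
theorem tree_decomposition_of_square {V ι : Type*} [Fintype V]
    (G : SimpleGraph V) (T : SimpleGraph ι) (hT : T.IsTree)
    (β' : ι → Set V)
    (hcover : ∀ v : V, ∃ t, v ∈ β' t)
    (hedge : ∀ u v : V, G.Adj u v → ∃ t, u ∈ β' t ∧ v ∈ β' t)
    (hconn : ∀ v : V, (T.induce {t | v ∈ β' t}).Connected)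
    (C C' : Set V)
    (hCC' : ∀ v ∈ C, ∀ w : V, (w = v ∨ G.Adj v w) → w ∈ C')
    (β : ι → Set V)
    (hβ : ∀ t, β t = {v ∈ C | ∃ w ∈ β' t, w ∈ C' ∧ (w = v ∨ G.Adj w v)})
    (Δ k : ℕ)
    (hdeg : ∀ v : V, (G.neighborSet v).ncard ≤ Δ)
    (hwidth : ∀ t, (β' t).ncard ≤ k + 1) :
    (∀ v ∈ C, ∃ t, v ∈ β t) ∧
    (∀ u v : V, u ∈ C → v ∈ C → (squareGraph G).Adj u v → ∃ t, u ∈ β t ∧ v ∈ β t) ∧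
    (∀ v ∈ C, (T.induce {t | v ∈ β t}).Connected) ∧
    (∀ t, (β t).ncard ≤ (Δ + 1) * (k + 1)) :=
  tree_decomposition_of_square_general G T β' hcover hedge hconn C C' hCC' β hβ Δ k hdeg hwidth
end

section
/- Let q ≥ 3 and let the 'subset gadget' graph Subset(α,β) (for q ≥ α ≥ β ≥ 1) consist of: input vertices V_in (α vertices) all adjacent to a vertex a; vertex a adjacent to q−α 'complement' vertices C; all vertices of C adjacent to a vertex b; and b adjacent to β output vertices V_out. Then in any proper q-coloring χ of the square of Subset(α,β) in which the α input vertices receive pairwise distinct colors and a, b are unconstrained (colorless), the output vertices receive pairwise distinct colors and χ(V_out) ⊆ χ(V_in). -/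
open SimpleGraph

/-- The subset gadget: `α` input vertices (`Sum.inl`), `q - α` complement vertices
(`Sum.inr ∘ Sum.inl`), `β` output vertices (`Sum.inr ∘ Sum.inr ∘ Sum.inl`), and two
colorless vertices `a` (index `0`) and `b` (index `1`) in the last summand.
Inputs are adjacent to `a`, complement vertices to both `a` and `b`, outputs to `b`. -/
def subsetGadget (q α β : ℕ) : SimpleGraph (Fin α ⊕ Fin (q - α) ⊕ Fin β ⊕ Fin 2) :=
  SimpleGraph.fromRel fun x y =>
    match x, y with
    | Sum.inl _, Sum.inr (Sum.inr (Sum.inr j)) => j = 0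
    | Sum.inr (Sum.inl _), Sum.inr (Sum.inr (Sum.inr _)) => True
    | Sum.inr (Sum.inr (Sum.inl _)), Sum.inr (Sum.inr (Sum.inr j)) => j = 1
    | _, _ => False

/-- The colored (non-colorless) vertices of the subset gadget. -/
def isColoredVtx {q α β : ℕ} : (Fin α ⊕ Fin (q - α) ⊕ Fin β ⊕ Fin 2) → Prop
  | Sum.inr (Sum.inr (Sum.inr _)) => False
  | _ => True

/-!
The inputs and the complement vertices are all neighbours of `a`, hence pairwise adjacent in the
square, so they receive pairwise distinct colors; as there are `q` of them, they use every color.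
The complement vertices and the outputs are all neighbours of `b`, so the outputs receive pairwise
distinct colors, none of which is a complement color: each is an input color.
-/

theorem squareGraph_adj_of_adj_of_adj {V : Type*} {G : SimpleGraph V} {x y w : V}
    (hxy : x ≠ y) (hx : G.Adj x w) (hy : G.Adj w y) : (squareGraph G).Adj x y :=
  ⟨hxy, Or.inr ⟨w, hx, hy⟩⟩

theorem eq_of_adj_of_adj_of_squareGraph_proper {V C : Type*} {G : SimpleGraph V} {P : V → Prop}
    {χ : V → C} (hproper : ∀ x y, P x → P y → (squareGraph G).Adj x y → χ x ≠ χ y)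
    {w x y : V} (hx : G.Adj w x) (hy : G.Adj w y) (hPx : P x) (hPy : P y) (hχ : χ x = χ y) :
    x = y := by
  by_contra hxy
  exact hproper x y hPx hPy (squareGraph_adj_of_adj_of_adj hxy hx.symm hy) hχ

namespace SubsetGadget

variable {q α β : ℕ}

theorem adj_input_a (i : Fin α) :
    (subsetGadget q α β).Adj (Sum.inr (Sum.inr (Sum.inr 0))) (Sum.inl i) := by
  simp [subsetGadget]

theorem adj_complement_a (c : Fin (q - α)) :
    (subsetGadget q α β).Adj (Sum.inr (Sum.inr (Sum.inr 0))) (Sum.inr (Sum.inl c)) := by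
  simp [subsetGadget]

theorem adj_complement_b (c : Fin (q - α)) :
    (subsetGadget q α β).Adj (Sum.inr (Sum.inr (Sum.inr 1))) (Sum.inr (Sum.inl c)) := by
  simp [subsetGadget]

theorem adj_output_b (o : Fin β) :
    (subsetGadget q α β).Adj (Sum.inr (Sum.inr (Sum.inr 1))) (Sum.inr (Sum.inr (Sum.inl o))) := by
  simp [subsetGadget]

def inputOrComplement (q α β : ℕ) :
    Fin α ⊕ Fin (q - α) → Fin α ⊕ Fin (q - α) ⊕ Fin β ⊕ Fin 2 :=
  Sum.elim Sum.inl (Sum.inr ∘ Sum.inl)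

theorem inputOrComplement_injective :
    Function.Injective (inputOrComplement q α β) := by
  rintro (i | c) (j | d) h <;> simp_all [inputOrComplement]

theorem bijective_comp_inputOrComplement
    {χ : (Fin α ⊕ Fin (q - α) ⊕ Fin β ⊕ Fin 2) → Fin q}
    (hproper : ∀ x y, isColoredVtx x → isColoredVtx y →
      (squareGraph (subsetGadget q α β)).Adj x y → χ x ≠ χ y) (hαq : α ≤ q) :
    Function.Bijective (χ ∘ inputOrComplement q α β) := by
  have hadj (z : Fin α ⊕ Fin (q - α)) :
      (subsetGadget q α β).Adj (Sum.inr (Sum.inr (Sum.inr 0))) (inputOrComplement q α β z) := by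
    rcases z with i | c
    exacts [adj_input_a i, adj_complement_a c]
  have hcolored (z : Fin α ⊕ Fin (q - α)) : isColoredVtx (inputOrComplement q α β z) := by
    rcases z with i | c <;> trivial
  have hinj : Function.Injective (χ ∘ inputOrComplement q α β) := fun z w h =>
    inputOrComplement_injective <| eq_of_adj_of_adj_of_squareGraph_proper hproper
      (hadj z) (hadj w) (hcolored z) (hcolored w) h
  refine (Fintype.bijective_iff_injective_and_card _).mpr ⟨hinj, ?_⟩
  simp [Nat.add_sub_cancel' hαq]

end SubsetGadget

open SubsetGadget

theorem subset_gadget_correct_general (q α β : ℕ) (hαq : α ≤ q)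
    (χ : (Fin α ⊕ Fin (q - α) ⊕ Fin β ⊕ Fin 2) → Fin q)
    (hproper : ∀ x y, isColoredVtx x → isColoredVtx y →
      (squareGraph (subsetGadget q α β)).Adj x y → χ x ≠ χ y) :
    (∀ i j : Fin β, i ≠ j →
        χ (Sum.inr (Sum.inr (Sum.inl i))) ≠ χ (Sum.inr (Sum.inr (Sum.inl j)))) ∧
    (∀ i : Fin β, ∃ i' : Fin α,
        χ (Sum.inr (Sum.inr (Sum.inl i))) = χ (Sum.inl i')) := by
  have houtput (i : Fin β) := adj_output_b (q := q) (α := α) i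
  refine ⟨fun i j hij hχ => hij ?_, fun i => ?_⟩
  · simpa using eq_of_adj_of_adj_of_squareGraph_proper hproper (houtput i) (houtput j) trivial
      trivial hχ
  · obtain ⟨i' | c, hc⟩ :=
      (bijective_comp_inputOrComplement hproper hαq).surjective
        (χ (Sum.inr (Sum.inr (Sum.inl i))))
    · exact ⟨i', hc.symm⟩
    · simpa using eq_of_adj_of_adj_of_squareGraph_proper hproper (adj_complement_b c) (houtput i)
        trivial trivial hc

/-- In any `q`-coloring of the colored vertices of the subset gadget
that is proper on its square (the colorless vertices `a, b` are unconstrained), if the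
input vertices receive pairwise distinct colors, then the output vertices receive
pairwise distinct colors, all taken from the set of input colors. -/
theorem subset_gadget_correct (q α β : ℕ) (hq : 3 ≤ q) (hαq : α ≤ q) (hβα : β ≤ α)
    (hβ : 1 ≤ β)
    (χ : (Fin α ⊕ Fin (q - α) ⊕ Fin β ⊕ Fin 2) → Fin q)
    (hproper : ∀ x y, isColoredVtx x → isColoredVtx y →
      (squareGraph (subsetGadget q α β)).Adj x y → χ x ≠ χ y)
    (hin : ∀ i j : Fin α, i ≠ j → χ (Sum.inl i) ≠ χ (Sum.inl j)) :
    (∀ i j : Fin β, i ≠ j →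
        χ (Sum.inr (Sum.inr (Sum.inl i))) ≠ χ (Sum.inr (Sum.inr (Sum.inl j)))) ∧
    (∀ i : Fin β, ∃ i' : Fin α,
        χ (Sum.inr (Sum.inr (Sum.inl i))) = χ (Sum.inl i')) :=
  subset_gadget_correct_general q α β hαq χ hproper
end
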